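/- arXiv:1711.09455 — 2 statements merged into one kernel-verified Lean document; each statement's English description precedes it below -/
import Mathlib

section
/- Let H be a real Hilbert space, A : H → 2^H a monotone set-valued operator possessing at least one zero, and (γ_n) a sequence of positive reals with ∑_{n=0}^∞ γ_n² = ∞. For each n let J_n : H → H be a resolvent of A of order γ_n. Let x ∈ H and define x₀ := x, x_{n+1} := J_n x_n. Then (x_n) converges weakly to a zero of A. -/
open Filter RealInnerProductSpace Topology Finset

/-!
Monotonicity of `A` at one proximal step, tested against a zero `q`, gives the Fejér inequality
`‖x (n+1) - q‖² + ‖x n - x (n+1)‖² ≤ ‖x n - q‖²`. Hence `‖x n - q‖` converges for every zero `q`,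
and `∑ γ n² ‖u n‖² < ∞` for the residuals `u n = (x n - x (n+1)) / γ n ∈ A (x (n+1))`. Monotonicity
also makes `‖u n‖` nonincreasing, so `∑ γ n² = ∞` forces `u n → 0`. A weak cluster point `p` of the
bounded sequence `x (n+1)` is then a zero of `A`: testing monotonicity against the resolvent point
`w = J 0 p`, at which `(p - w) / γ 0 ∈ A w`, gives `‖p - w‖² ≤ 0`. Finally (Opial), for two zeros
`p, p'` the limit of `⟪x n, p - p'⟫` exists by polarization, so two weak cluster points that are
zeros coincide, and weak compactness of balls yields weak convergence of the whole sequence.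
-/

theorem sum_range_le_of_succ_add_le {a b : ℕ → ℝ} (h : ∀ n, a (n + 1) + b n ≤ a n)
    (ha : ∀ n, 0 ≤ a n) (N : ℕ) : ∑ n ∈ range N, b n ≤ a 0 := by
  suffices ∑ n ∈ range N, b n + a N ≤ a 0 by linarith [ha N]
  induction N with
  | zero => simp
  | succ N ih => rw [sum_range_succ]; linarith [h N]

theorem tendsto_zero_of_antitone_of_sum_mul_le {a w : ℕ → ℝ} {C : ℝ} (ha : Antitone a)
    (ha0 : ∀ n, 0 ≤ a n) (hw : ∀ n, 0 ≤ w n)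
    (hW : Tendsto (fun N => ∑ n ∈ range N, w n) atTop atTop)
    (hC : ∀ N, ∑ n ∈ range N, w n * a n ≤ C) : Tendsto a atTop (𝓝 0) := by
  have hbdd : BddBelow (Set.range a) := ⟨0, Set.forall_mem_range.2 ha0⟩
  convert tendsto_atTop_ciInf ha hbdd
  by_contra hL
  have hL : 0 < ⨅ n, a n := lt_of_le_of_ne (le_ciInf ha0) hL
  have hLC : ∀ N, (⨅ n, a n) * ∑ n ∈ range N, w n ≤ C := fun N => by
    refine le_trans ?_ (hC N)
    rw [mul_sum]
    exact sum_le_sum fun n _ => by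
      rw [mul_comm]; exact mul_le_mul_of_nonneg_left (ciInf_le hbdd n) (hw n)
  obtain ⟨N, hN⟩ := ((hW.const_mul_atTop hL).eventually_gt_atTop C).exists
  exact (hLC N).not_gt hN

theorem isBoundedUnder_norm_of_tendsto_norm_sub {E ι : Type*} [SeminormedAddCommGroup E]
    {l : Filter ι} {f : ι → E} {q : E} {a : ℝ} (h : Tendsto (fun i => ‖f i - q‖) l (𝓝 a)) :
    IsBoundedUnder (· ≤ ·) l fun i => ‖f i‖ := by
  obtain ⟨R, hR⟩ := h.isBoundedUnder_le
  refine ⟨R + ‖q‖, (eventually_map.1 hR).mono fun i (hi : ‖f i - q‖ ≤ R) => ?_⟩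
  exact (norm_le_norm_sub_add (f i) q).trans (by gcongr)

section WeakTopology

variable {H : Type*} [NormedAddCommGroup H] [InnerProductSpace ℝ H] [CompleteSpace H]
  {ι : Type*}

theorem tendsto_toWeakSpace_iff {l : Filter ι} {f : ι → H} {p : H} :
    Tendsto (fun i => toWeakSpace ℝ H (f i)) l (𝓝 (toWeakSpace ℝ H p)) ↔
      ∀ z, Tendsto (fun i => ⟪f i, z⟫) l (𝓝 ⟪p, z⟫) := by
  have hinj : Function.Injective (topDualPairing ℝ H).flip := fun a b hab =>
    ext_inner_left ℝ fun v => by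
      simpa using LinearMap.congr_fun hab (InnerProductSpace.toDual ℝ H v)
  refine (WeakBilin.tendsto_iff_forall_eval_tendsto _ hinj).trans ⟨?_, ?_⟩
  · intro h z
    have : Tendsto (fun i => InnerProductSpace.toDual ℝ H z (f i)) l
        (𝓝 (InnerProductSpace.toDual ℝ H z p)) := h (InnerProductSpace.toDual ℝ H z)
    simpa only [InnerProductSpace.toDual_apply_apply, real_inner_comm z] using this
  · intro h φ
    obtain ⟨z, rfl⟩ := (InnerProductSpace.toDual ℝ H).surjective φ
    show Tendsto (fun i => InnerProductSpace.toDual ℝ H z (f i)) l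
      (𝓝 (InnerProductSpace.toDual ℝ H z p))
    simpa only [InnerProductSpace.toDual_apply_apply, real_inner_comm z] using h z

theorem exists_tendsto_toWeakSpace_of_isBoundedUnder (U : Ultrafilter ι) {f : ι → H}
    (hf : IsBoundedUnder (· ≤ ·) U fun i => ‖f i‖) :
    ∃ p, Tendsto (fun i => toWeakSpace ℝ H (f i)) U (𝓝 (toWeakSpace ℝ H p)) := by
  obtain ⟨R, hR⟩ := hf
  let Y : ι → WeakDual ℝ H := fun i => StrongDual.toWeakDual (InnerProductSpace.toDual ℝ H (f i))
  have hYU : (U.map Y : Filter (WeakDual ℝ H)) ≤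
      𝓟 (WeakDual.toStrongDual ⁻¹' Metric.closedBall 0 R) := by
    refine le_principal_iff.2 (Filter.mem_map.2 ((eventually_map.1 hR).mono fun i hi => ?_))
    simpa [Y] using hi
  obtain ⟨φ, -, hφ⟩ := (WeakDual.isCompact_closedBall 0 R).ultrafilter_le_nhds _ hYU
  refine ⟨(InnerProductSpace.toDual ℝ H).symm (WeakDual.toStrongDual φ),
    tendsto_toWeakSpace_iff.2 fun z => ?_⟩
  simpa [Y, Function.comp_def] using ((WeakDual.eval_continuous z).tendsto φ).comp hφ

theorem eq_of_tendsto_toWeakSpace_of_tendsto_norm_sub {l L L' : Filter ι} [L.NeBot] [L'.NeBot]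
    (hL : L ≤ l) (hL' : L' ≤ l) {x : ι → H} {p p' : H} {a a' : ℝ}
    (ha : Tendsto (fun i => ‖x i - p‖) l (𝓝 a)) (ha' : Tendsto (fun i => ‖x i - p'‖) l (𝓝 a'))
    (hp : Tendsto (fun i => toWeakSpace ℝ H (x i)) L (𝓝 (toWeakSpace ℝ H p)))
    (hp' : Tendsto (fun i => toWeakSpace ℝ H (x i)) L' (𝓝 (toWeakSpace ℝ H p'))) :
    p = p' := by
  have hpolar : ∀ i, ⟪x i, p - p'⟫ = (‖x i - p'‖ ^ 2 - ‖x i - p‖ ^ 2 + ‖p‖ ^ 2 - ‖p'‖ ^ 2) / 2 :=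
    fun i => by rw [norm_sub_sq_real, norm_sub_sq_real, inner_sub_right]; ring
  have hlim : Tendsto (fun i => ⟪x i, p - p'⟫) l
      (𝓝 ((a' ^ 2 - a ^ 2 + ‖p‖ ^ 2 - ‖p'‖ ^ 2) / 2)) := by
    simp only [hpolar]
    exact ((((ha'.pow 2).sub (ha.pow 2)).add_const _).sub_const _).div_const 2
  have h : ⟪p, p - p'⟫ = ⟪p', p - p'⟫ :=
    (tendsto_nhds_unique (tendsto_toWeakSpace_iff.1 hp _) (hlim.mono_left hL)).trans
      (tendsto_nhds_unique (tendsto_toWeakSpace_iff.1 hp' _) (hlim.mono_left hL')).symm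
  rwa [← sub_eq_zero, ← inner_sub_left, inner_self_eq_zero, sub_eq_zero] at h

theorem exists_tendsto_toWeakSpace_of_tendsto_norm_sub {S : Set H} (hS : S.Nonempty)
    {x : ℕ → H} (hdist : ∀ q ∈ S, ∃ a, Tendsto (fun n => ‖x n - q‖) atTop (𝓝 a))
    (hclus : ∀ (U : Ultrafilter ℕ) (p : H), (U : Filter ℕ) ≤ atTop →
      Tendsto (fun n => toWeakSpace ℝ H (x n)) U (𝓝 (toWeakSpace ℝ H p)) → p ∈ S) :
    ∃ p ∈ S, Tendsto (fun n => toWeakSpace ℝ H (x n)) atTop (𝓝 (toWeakSpace ℝ H p)) := by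
  obtain ⟨q, hq⟩ := hS
  obtain ⟨a, ha⟩ := hdist q hq
  have hbdd := isBoundedUnder_norm_of_tendsto_norm_sub ha
  have hclus' : ∀ U : Ultrafilter ℕ, (U : Filter ℕ) ≤ atTop →
      ∃ p ∈ S, Tendsto (fun n => toWeakSpace ℝ H (x n)) U (𝓝 (toWeakSpace ℝ H p)) := by
    intro U hU
    obtain ⟨p, hp⟩ := exists_tendsto_toWeakSpace_of_isBoundedUnder U (hbdd.mono hU)
    exact ⟨p, hclus U p hU hp, hp⟩
  obtain ⟨U₀, hU₀⟩ := exists_ultrafilter_le (atTop : Filter ℕ)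
  obtain ⟨p, hpS, hp⟩ := hclus' U₀ hU₀
  refine ⟨p, hpS, (tendsto_iff_ultrafilter _ _ _).2 fun U hU => ?_⟩
  obtain ⟨p', hp'S, hp'⟩ := hclus' U hU
  obtain ⟨b, hb⟩ := hdist p hpS
  obtain ⟨b', hb'⟩ := hdist p' hp'S
  rwa [eq_of_tendsto_toWeakSpace_of_tendsto_norm_sub hU₀ hU hb hb' hp hp']

end WeakTopology

section MonotoneOperator

variable {H : Type*} [NormedAddCommGroup H] [InnerProductSpace ℝ H]

def IsMonotoneOperator (A : H → Set H) : Prop :=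
  ∀ x y u v : H, u ∈ A x → v ∈ A y → 0 ≤ ⟪x - y, u - v⟫

namespace IsMonotoneOperator

variable {A : H → Set H}

theorem norm_sub_sq_add_norm_sub_sq_le (hA : IsMonotoneOperator A) {γ : ℝ} (hγ : 0 < γ)
    {x y q : H} (hy : (1 / γ) • (x - y) ∈ A y) (hq : (0 : H) ∈ A q) :
    ‖y - q‖ ^ 2 + ‖x - y‖ ^ 2 ≤ ‖x - q‖ ^ 2 := by
  have h : 0 ≤ (1 / γ) * ⟪y - q, x - y⟫ := by
    simpa [real_inner_smul_right] using hA _ _ _ _ hy hq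
  have hexp : ‖x - q‖ ^ 2 = ‖y - q‖ ^ 2 + 2 * ⟪y - q, x - y⟫ + ‖x - y‖ ^ 2 := by
    rw [← norm_add_sq_real, sub_add_sub_cancel']
  nlinarith [(nonneg_of_mul_nonneg_right h (one_div_pos.2 hγ))]

theorem norm_le_of_sub_eq_smul (hA : IsMonotoneOperator A) {γ : ℝ} (hγ : 0 < γ) {y z u v : H}
    (hu : u ∈ A y) (hv : v ∈ A z) (h : y - z = γ • v) : ‖v‖ ≤ ‖u‖ := by
  have hinner : 0 ≤ γ * (⟪v, u⟫ - ‖v‖ ^ 2) := by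
    have := hA _ _ _ _ hu hv
    rwa [h, real_inner_smul_left, inner_sub_right, real_inner_self_eq_norm_sq] at this
  have hvu : ‖v‖ ^ 2 ≤ ‖v‖ * ‖u‖ := by
    nlinarith [nonneg_of_mul_nonneg_right hinner hγ, real_inner_le_norm v u]
  nlinarith [norm_nonneg u, norm_nonneg v]

theorem zero_mem_of_tendsto_toWeakSpace [CompleteSpace H] (hA : IsMonotoneOperator A) {γ : ℝ}
    (hγ : 0 < γ) {p w : H} (hw : (1 / γ) • (p - w) ∈ A w) {ι : Type*} {l : Filter ι} [l.NeBot]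
    {y v : ι → H} (hv : ∀ i, v i ∈ A (y i)) (hy : IsBoundedUnder (· ≤ ·) l fun i => ‖y i‖)
    (hv0 : Tendsto v l (𝓝 0))
    (hyp : Tendsto (fun i => toWeakSpace ℝ H (y i)) l (𝓝 (toWeakSpace ℝ H p))) :
    (0 : H) ∈ A p := by
  set r := (1 / γ) • (p - w) with hr
  have hyv : Tendsto (fun i => ⟪y i, v i⟫) l (𝓝 0) := by
    refine squeeze_zero_norm (fun i => norm_inner_le_norm _ _) ?_
    simpa using isBoundedUnder_le_mul_tendsto_zero (by simpa [Function.comp_def] using hy)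
      (tendsto_norm_zero.comp hv0)
  have hlim : Tendsto (fun i => ⟪y i - w, v i - r⟫) l (𝓝 (-⟪p - w, r⟫)) := by
    have h := ((hyv.sub ((tendsto_const_nhds (x := w)).inner hv0)).sub
      (tendsto_toWeakSpace_iff.1 hyp r)).add_const ⟪w, r⟫
    convert h using 2
    · simp only [inner_sub_left, inner_sub_right]; ring
    · simp only [inner_zero_right, inner_sub_left]; ring
  have hnonneg : 0 ≤ -⟪p - w, r⟫ :=
    ge_of_tendsto' hlim fun i => hA _ _ _ _ (hv i) hw
  have hpw : ‖p - w‖ ^ 2 ≤ 0 := by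
    rw [real_inner_smul_right, real_inner_self_eq_norm_sq] at hnonneg
    nlinarith [one_div_pos.2 hγ]
  obtain rfl : p = w := by
    rwa [sq_nonpos_iff, norm_eq_zero, sub_eq_zero] at hpw
  simpa [hr] using hw

section ProximalPoint

variable {γ : ℕ → ℝ} {x : ℕ → H}

theorem antitone_norm_sub_of_proximal (hA : IsMonotoneOperator A) (hγ : ∀ n, 0 < γ n)
    (hx : ∀ n, (1 / γ n) • (x n - x (n + 1)) ∈ A (x (n + 1))) {q : H} (hq : (0 : H) ∈ A q) :
    Antitone fun n => ‖x n - q‖ :=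
  antitone_nat_of_succ_le fun n =>
    (pow_le_pow_iff_left₀ (norm_nonneg _) (norm_nonneg _) two_ne_zero).1 <|
      (le_add_of_nonneg_right (sq_nonneg _)).trans
        (hA.norm_sub_sq_add_norm_sub_sq_le (hγ n) (hx n) hq)

theorem tendsto_residual_of_proximal (hA : IsMonotoneOperator A) (hγ : ∀ n, 0 < γ n)
    (hdiv : Tendsto (fun N => ∑ n ∈ range N, γ n ^ 2) atTop atTop)
    (hx : ∀ n, (1 / γ n) • (x n - x (n + 1)) ∈ A (x (n + 1))) {q : H} (hq : (0 : H) ∈ A q) :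
    Tendsto (fun n => (1 / γ n) • (x n - x (n + 1))) atTop (𝓝 0) := by
  set u : ℕ → H := fun n => (1 / γ n) • (x n - x (n + 1))
  have hstep : ∀ n, x n - x (n + 1) = γ n • u n := fun n => by
    simp [u, smul_smul, (hγ n).ne']
  have hanti : Antitone fun n => ‖u n‖ ^ 2 := antitone_nat_of_succ_le fun n =>
    pow_le_pow_left₀ (norm_nonneg _)
      (hA.norm_le_of_sub_eq_smul (hγ (n + 1)) (hx n) (hx (n + 1)) (hstep (n + 1))) 2
  have hsum : ∀ N, ∑ n ∈ range N, γ n ^ 2 * ‖u n‖ ^ 2 ≤ ‖x 0 - q‖ ^ 2 := by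
    refine sum_range_le_of_succ_add_le (a := fun n => ‖x n - q‖ ^ 2) (fun n => ?_)
      fun n => by positivity
    simpa [hstep n, norm_smul, mul_pow, abs_of_pos (hγ n)] using
      hA.norm_sub_sq_add_norm_sub_sq_le (hγ n) (hx n) hq
  have hsq := tendsto_zero_of_antitone_of_sum_mul_le hanti (fun n => by positivity)
    (fun n => by positivity) hdiv hsum
  rw [tendsto_zero_iff_norm_tendsto_zero]
  simpa using hsq.sqrt

end ProximalPoint

end IsMonotoneOperator

end MonotoneOperator

theorem stmt5_general
    {H : Type*} [NormedAddCommGroup H] [InnerProductSpace ℝ H] [CompleteSpace H]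
    (A : H → Set H)
    (hmono : ∀ x y u v : H, u ∈ A x → v ∈ A y → 0 ≤ ⟪x - y, u - v⟫)
    (hzer : ∃ q : H, (0 : H) ∈ A q)
    (γ : ℕ → ℝ) (hγ : ∀ n, 0 < γ n)
    (hdiv : Tendsto (fun N => ∑ n ∈ Finset.range N, γ n ^ 2) atTop atTop)
    (J : ℕ → H → H)
    (hJ : ∀ n, ∀ x : H, (1 / γ n) • (x - J n x) ∈ A (J n x))
    (x : ℕ → H) (hx : ∀ n, x (n + 1) = J n (x n)) :
    ∃ p : H, (0 : H) ∈ A p ∧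
      Tendsto (fun n => toWeakSpace ℝ H (x n)) atTop (nhds (toWeakSpace ℝ H p)) := by
  have hA : IsMonotoneOperator A := hmono
  have hprox : ∀ n, (1 / γ n) • (x n - x (n + 1)) ∈ A (x (n + 1)) := fun n => by
    simpa only [hx n] using hJ n (x n)
  have hdist : ∀ q ∈ {q | (0 : H) ∈ A q}, ∃ a,
      Tendsto (fun n => ‖x (n + 1) - q‖) atTop (𝓝 a) := fun q hq =>
    ⟨_, (tendsto_atTop_ciInf (hA.antitone_norm_sub_of_proximal hγ hprox hq)
      ⟨0, Set.forall_mem_range.2 fun n => norm_nonneg _⟩).comp (tendsto_add_atTop_nat 1)⟩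
  obtain ⟨q, hq⟩ := hzer
  obtain ⟨a, ha⟩ := hdist q hq
  obtain ⟨p, hp, hlim⟩ := exists_tendsto_toWeakSpace_of_tendsto_norm_sub ⟨q, hq⟩ hdist
    fun U p hU hp => hA.zero_mem_of_tendsto_toWeakSpace (hγ 0) (hJ 0 p) hprox
      ((isBoundedUnder_norm_of_tendsto_norm_sub ha).mono hU)
      ((hA.tendsto_residual_of_proximal hγ hdiv hprox hq).mono_left hU) hp
  exact ⟨p, hp, (tendsto_add_atTop_iff_nat 1).1 hlim⟩

theorem stmt5
    {H : Type*} [NormedAddCommGroup H] [InnerProductSpace ℝ H] [CompleteSpace H]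
    (A : H → Set H)
    (hmono : ∀ x y u v : H, u ∈ A x → v ∈ A y → 0 ≤ ⟪x - y, u - v⟫)
    (hzer : ∃ q : H, (0 : H) ∈ A q)
    (γ : ℕ → ℝ) (hγ : ∀ n, 0 < γ n)
    (hdiv : Tendsto (fun N => ∑ n ∈ Finset.range N, γ n ^ 2) atTop atTop)
    (J : ℕ → H → H)
    (hJ : ∀ n, ∀ x : H, (1 / γ n) • (x - J n x) ∈ A (J n x))
    (x₀ : H) (x : ℕ → H) (hx0 : x 0 = x₀) (hx : ∀ n, x (n + 1) = J n (x n)) :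
    ∃ p : H, (0 : H) ∈ A p ∧
      Tendsto (fun n => toWeakSpace ℝ H (x n)) atTop (nhds (toWeakSpace ℝ H p)) :=
  stmt5_general A hmono hzer γ hγ hdiv J hJ x hx
end

section
/- Let (X,d) be a metric space, (T_n) a family of self-maps of X each satisfying property (P₂) and having a common fixed point, and (γ_n) a sequence of positive reals with ∑_{n=0}^∞ γ_n² = ∞. Let x ∈ X, let (x_n) be the proximal-point iteration starting at x, and assume condition (C1) holds and condition (C2) holds for (x_n). Then for every m ∈ ℕ: lim_{n→∞} d(x_n, T_m x_n) = 0. -/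
/-!
With `q` a common fixed point, (P₂) at the pair `(xₙ, q)` gives
`d(xₙ₊₁, q)² + d(xₙ, xₙ₊₁)² ≤ d(xₙ, q)²`, so the steps `sₙ = d(xₙ, xₙ₊₁)` are square-summable.
By (C2) the ratios `sₙ / γₙ` decrease to some `L ≥ 0`, and `L > 0` would force
`∑ γₙ² ≤ L⁻² ∑ sₙ² < ∞`; hence `sₙ / γₙ → 0`. Finally (C1) bounds
`d(xₙ, Tₘ xₙ) ≤ sₙ + |γₙ - γₘ| · sₙ / γₙ ≤ 2 sₙ + γₘ · sₙ / γₙ`.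
-/

open Filter

/-- Property (P₂) for a self-map of a metric space. -/
def PropP2 {X : Type*} [MetricSpace X] (T : X → X) : Prop :=
  ∀ x y : X, 2 * dist (T x) (T y) ^ 2 ≤
    dist x (T y) ^ 2 + dist y (T x) ^ 2 - dist x (T x) ^ 2 - dist y (T y) ^ 2

open Topology

theorem PropP2.dist_sq_add_dist_sq_le {X : Type*} [MetricSpace X] {T : X → X}
    (hT : PropP2 T) {q : X} (hq : T q = q) (x : X) :
    dist (T x) q ^ 2 + dist x (T x) ^ 2 ≤ dist x q ^ 2 := by
  have h := hT x q
  rw [hq, dist_comm q (T x), dist_self] at h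
  linarith

theorem summable_of_add_le {b f : ℕ → ℝ} (hb : ∀ n, 0 ≤ b n) (hf : ∀ n, 0 ≤ f n)
    (h : ∀ n, b (n + 1) + f n ≤ b n) : Summable f := by
  have telescope : ∀ N, ∑ n ∈ Finset.range N, f n + b N ≤ b 0 := by
    intro N
    induction N with
    | zero => simp
    | succ N ih =>
      rw [Finset.sum_range_succ]
      linarith [h N]
  exact summable_of_sum_range_le hf fun N => by linarith [telescope N, hb N]

theorem summable_dist_succ_sq_of_propP2 {X : Type*} [MetricSpace X] {T : ℕ → X → X}
    (hP2 : ∀ n, PropP2 (T n)) {q : X} (hq : ∀ n, T n q = q) {x : ℕ → X}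
    (hx : ∀ n, x (n + 1) = T n (x n)) :
    Summable fun n => dist (x n) (x (n + 1)) ^ 2 :=
  summable_of_add_le (b := fun n => dist (x n) q ^ 2) (fun _ => sq_nonneg _)
    (fun _ => sq_nonneg _) fun n => by
      simpa only [hx n] using (hP2 n).dist_sq_add_dist_sq_le (hq n) (x n)

theorem Antitone.tendsto_zero_of_summable_mul {c w : ℕ → ℝ} (hc : Antitone c)
    (hc0 : ∀ n, 0 ≤ c n) (hw0 : ∀ n, 0 ≤ w n) (hw : ¬Summable w)
    (hwc : Summable fun n => w n * c n) : Tendsto c atTop (𝓝 0) := by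
  have hbdd : BddBelow (Set.range c) := ⟨0, Set.forall_mem_range.2 hc0⟩
  have hlim := tendsto_atTop_ciInf hc hbdd
  suffices hL : ⨅ n, c n = 0 by rwa [hL] at hlim
  refine le_antisymm (not_lt.1 fun hpos => hw ?_) (le_ciInf hc0)
  have hwL : Summable fun n => w n * ⨅ n, c n :=
    hwc.of_nonneg_of_le (fun n => mul_nonneg (hw0 n) hpos.le)
      fun n => mul_le_mul_of_nonneg_left (ciInf_le hbdd n) (hw0 n)
  exact (summable_mul_right_iff hpos.ne').1 hwL

theorem tendsto_zero_of_sq_tendsto_zero {α : Type*} {l : Filter α} {f : α → ℝ}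
    (hf : ∀ a, 0 ≤ f a) (h : Tendsto (fun a => f a ^ 2) l (𝓝 0)) : Tendsto f l (𝓝 0) := by
  simpa only [Real.sqrt_sq (hf _), Real.sqrt_zero] using h.sqrt

theorem tendsto_div_zero_of_antitone {s γ : ℕ → ℝ} (hs : ∀ n, 0 ≤ s n) (hγ : ∀ n, 0 < γ n)
    (hγdiv : ¬Summable fun n => γ n ^ 2) (hs2 : Summable fun n => s n ^ 2)
    (hanti : Antitone fun n => s n / γ n) : Tendsto (fun n => s n / γ n) atTop (𝓝 0) := by
  have hc0 : ∀ n, 0 ≤ s n / γ n := fun n => div_nonneg (hs n) (hγ n).le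
  have hanti2 : Antitone fun n => (s n / γ n) ^ 2 := fun _ _ hab =>
    pow_le_pow_left₀ (hc0 _) (hanti hab) 2
  have hmul : (fun n => γ n ^ 2 * (s n / γ n) ^ 2) = fun n => s n ^ 2 := by
    funext n
    field_simp [(hγ n).ne']
  refine tendsto_zero_of_sq_tendsto_zero hc0 <|
    hanti2.tendsto_zero_of_summable_mul (fun n => sq_nonneg _) (fun n => sq_nonneg _) hγdiv ?_
  rwa [hmul]

theorem dist_le_of_dist_le_abs_sub_div_mul {X : Type*} [MetricSpace X] {w y z : X} {g h : ℝ}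
    (hg : 0 < g) (hh : 0 ≤ h) (hyz : dist y z ≤ |g - h| / g * dist w y) :
    dist w z ≤ 2 * dist w y + h * (dist w y / g) := by
  have habs : |g - h| ≤ g + h := abs_sub_le_iff.2 ⟨by linarith, by linarith⟩
  calc dist w z ≤ dist w y + dist y z := dist_triangle w y z
    _ ≤ dist w y + |g - h| / g * dist w y := by gcongr
    _ = dist w y + |g - h| * (dist w y / g) := by rw [div_mul_comm, mul_comm]
    _ ≤ dist w y + (g + h) * (dist w y / g) := by gcongr
    _ = 2 * dist w y + h * (dist w y / g) := by field_simp; ring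

theorem stmt9_general
    {X : Type*} [MetricSpace X]
    (T : ℕ → X → X) (hP2 : ∀ n, PropP2 (T n))
    (hF : ∃ q : X, ∀ n, T n q = q)
    (γ : ℕ → ℝ) (hγ : ∀ n, 0 < γ n)
    (hdiv : Tendsto (fun N => ∑ n ∈ Finset.range N, γ n ^ 2) atTop atTop)
    (x : ℕ → X) (hx : ∀ n, x (n + 1) = T n (x n))
    (hC1 : ∀ n m : ℕ, ∀ w : X,
      dist (T n w) (T m w) ≤ (|γ n - γ m| / γ n) * dist w (T n w))
    (hC2 : ∀ n : ℕ,
      dist (x (n + 1)) (x (n + 2)) / γ (n + 1) ≤ dist (x n) (x (n + 1)) / γ n) :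
    ∀ m : ℕ, Tendsto (fun n => dist (x n) (T m (x n))) atTop (nhds 0) := by
  obtain ⟨q, hq⟩ := hF
  set s : ℕ → ℝ := fun n => dist (x n) (x (n + 1))
  have hs2 : Summable fun n => s n ^ 2 := summable_dist_succ_sq_of_propP2 hP2 hq hx
  have hs : Tendsto s atTop (𝓝 0) :=
    tendsto_zero_of_sq_tendsto_zero (fun _ => dist_nonneg) hs2.tendsto_atTop_zero
  have hγdiv : ¬Summable fun n => γ n ^ 2 :=
    (not_summable_iff_tendsto_nat_atTop_of_nonneg fun n => sq_nonneg _).2 hdiv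
  have hratio : Tendsto (fun n => s n / γ n) atTop (𝓝 0) :=
    tendsto_div_zero_of_antitone (fun _ => dist_nonneg) hγ hγdiv hs2 (antitone_nat_of_succ_le hC2)
  intro m
  have hbound : ∀ n, dist (x n) (T m (x n)) ≤ 2 * s n + γ m * (s n / γ n) := fun n => by
    simpa only [s, hx n] using
      dist_le_of_dist_le_abs_sub_div_mul (hγ n) (hγ m).le (hC1 n m (x n))
  have hlim : Tendsto (fun n => 2 * s n + γ m * (s n / γ n)) atTop (𝓝 0) := by
    simpa using (hs.const_mul 2).add (hratio.const_mul (γ m))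
  exact squeeze_zero (fun _ => dist_nonneg) hbound hlim

theorem stmt9
    {X : Type*} [MetricSpace X]
    (T : ℕ → X → X) (hP2 : ∀ n, PropP2 (T n))
    (hF : ∃ q : X, ∀ n, T n q = q)
    (γ : ℕ → ℝ) (hγ : ∀ n, 0 < γ n)
    (hdiv : Tendsto (fun N => ∑ n ∈ Finset.range N, γ n ^ 2) atTop atTop)
    (x₀ : X) (x : ℕ → X) (hx0 : x 0 = x₀) (hx : ∀ n, x (n + 1) = T n (x n))
    (hC1 : ∀ n m : ℕ, ∀ w : X,
      dist (T n w) (T m w) ≤ (|γ n - γ m| / γ n) * dist w (T n w))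
    (hC2 : ∀ n : ℕ,
      dist (x (n + 1)) (x (n + 2)) / γ (n + 1) ≤ dist (x n) (x (n + 1)) / γ n) :
    ∀ m : ℕ, Tendsto (fun n => dist (x n) (T m (x n))) atTop (nhds 0) :=
  stmt9_general T hP2 hF γ hγ hdiv x hx hC1 hC2
end
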